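/- Let S = Σ_{i=1}^k X_i where X_i are i.i.d. Geom(p) on {1,2,...}, so E[S] = k/p. Then P(S ≥ E[S]/2) ≥ 1/2. -/

import Mathlib

/-!
Write `S j = X 0 + ⋯ + X (j - 1)`. Splitting `S (c + 1) = m + 1` over the tuples of values gives
the negative binomial law `P(S (c + 1) = m + 1) = C(m, c) p^(c+1) (1-p)^(m-c)`, and summing over `c`
by the binomial theorem shows `∑_c P(S (c + 1) = m + 1) ≤ p` (the chance that trial `m + 1` is a
success). Since `S` is nondecreasing in `j`, `k P(S k ≤ n) ≤ ∑_{c<k} P(S (c + 1) ≤ n) ≤ n p`, which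
is below `k / 2` when `n` is the largest integer below `k / (2p)`.
-/

open MeasureTheory ProbabilityTheory Finset

/-- PMF of the geometric distribution on `{1,2,…}`. -/
noncomputable def geomPMF (p : ℝ) (k : ℕ) : ℝ :=
  if k = 0 then 0 else (1 - p) ^ (k - 1) * p

lemma geomPMF_zero (p : ℝ) : geomPMF p 0 = 0 := if_pos rfl

lemma geomPMF_succ (p : ℝ) (m : ℕ) : geomPMF p (m + 1) = (1 - p) ^ m * p := if_neg m.succ_ne_zero

lemma geomPMF_nonneg {p : ℝ} (hp0 : 0 ≤ p) (hp1 : p ≤ 1) (m : ℕ) : 0 ≤ geomPMF p m := by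
  unfold geomPMF
  split_ifs
  · exact le_rfl
  · exact mul_nonneg (pow_nonneg (by linarith) _) hp0

namespace Finset

lemma card_piAntidiag_univ {ι : Type*} [Fintype ι] [DecidableEq ι] (n : ℕ) :
    #(piAntidiag (univ : Finset ι) n) = (Fintype.card ι).multichoose n := by
  rw [← map_sym_eq_piAntidiag, card_map, sym_univ, card_univ, Sym.card_sym_eq_multichoose]

end Finset

section NegativeBinomial

variable {ι : Type*} [Fintype ι] (p : ℝ)

lemma one_le_of_prod_geomPMF_ne_zero {f : ι → ℕ} (h : ∏ i, geomPMF p (f i) ≠ 0) (i : ι) :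
    1 ≤ f i :=
  Nat.one_le_iff_ne_zero.mpr fun h0 => h (prod_eq_zero (mem_univ i) (by rw [h0, geomPMF_zero]))

variable [DecidableEq ι]

lemma sum_piAntidiag_add_card_prod_geomPMF (m : ℕ) :
    ∑ f ∈ piAntidiag (univ : Finset ι) (m + Fintype.card ι), ∏ i, geomPMF p (f i)
      = (Fintype.card ι).multichoose m * p ^ Fintype.card ι * (1 - p) ^ m := by
  -- the nonzero terms are those with all entries positive: the shifts of `piAntidiag univ m`
  let shift : (ι → ℕ) ↪ (ι → ℕ) := ⟨(· + 1), add_left_injective 1⟩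
  have hshift : (piAntidiag univ m).map shift ⊆ piAntidiag univ (m + Fintype.card ι) := by
    intro f hf
    obtain ⟨g, hg, rfl⟩ := mem_map.mp hf
    simp_all [shift, sum_add_distrib]
  rw [← sum_subset hshift, sum_map]
  · have hterm : ∀ g ∈ piAntidiag univ m, ∏ i, geomPMF p (shift g i)
        = p ^ Fintype.card ι * (1 - p) ^ m := by
      intro g hg
      simp only [shift, Function.Embedding.coeFn_mk, Pi.add_apply, Pi.one_apply, geomPMF_succ,
        prod_mul_distrib, prod_pow_eq_pow_sum, prod_const, card_univ, (mem_piAntidiag.mp hg).1]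
      ring
    rw [sum_congr rfl hterm, sum_const, card_piAntidiag_univ, nsmul_eq_mul, mul_assoc]
  · intro f hf hnot
    by_contra hne
    have hf1 := one_le_of_prod_geomPMF_ne_zero p hne
    refine hnot (mem_map.mpr ⟨f - 1, ?_, funext fun i => Nat.sub_add_cancel (hf1 i)⟩)
    simp only [mem_piAntidiag, Pi.sub_apply, Pi.one_apply, mem_univ, implies_true, and_true]
    rw [sum_tsub_distrib _ fun i _ => hf1 i, (mem_piAntidiag.mp hf).1]
    simp

lemma sum_piAntidiag_prod_geomPMF_of_lt {n : ℕ} (hn : n < Fintype.card ι) :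
    ∑ f ∈ piAntidiag (univ : Finset ι) n, ∏ i, geomPMF p (f i) = 0 := by
  refine sum_eq_zero fun f hf => ?_
  by_contra hne
  have hcard : Fintype.card ι ≤ n := by
    simpa [(mem_piAntidiag.mp hf).1] using
      sum_le_sum fun i (_ : i ∈ univ) => one_le_of_prod_geomPMF_ne_zero p hne i
  omega

lemma sum_piAntidiag_fin_succ_prod_geomPMF (c m : ℕ) :
    ∑ f ∈ piAntidiag (univ : Finset (Fin (c + 1))) (m + 1), ∏ i, geomPMF p (f i)
      = m.choose c * p ^ (c + 1) * (1 - p) ^ (m - c) := by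
  rcases le_or_gt c m with hcm | hmc
  · obtain ⟨d, rfl⟩ := Nat.exists_eq_add_of_le' hcm
    have := sum_piAntidiag_add_card_prod_geomPMF (ι := Fin (c + 1)) p d
    rw [Fintype.card_fin, Nat.multichoose_eq, ← add_assoc] at this
    rw [this, Nat.add_sub_cancel, show c + 1 + d - 1 = d + c by omega, Nat.choose_symm_add]
  · rw [sum_piAntidiag_prod_geomPMF_of_lt p (by simpa using hmc), Nat.choose_eq_zero_of_lt hmc]
    simp

end NegativeBinomial

namespace ProbabilityTheory

variable {Ω ι : Type*} [MeasurableSpace Ω] {μ : Measure Ω} [Fintype ι] [DecidableEq ι]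
  {Y : ι → Ω → ℕ}

lemma iIndepFun.measure_sum_eq_sum_piAntidiag (hind : iIndepFun Y μ) (hY : ∀ i, Measurable (Y i))
    (m : ℕ) :
    μ {ω | ∑ i, Y i ω = m} = ∑ f ∈ piAntidiag univ m, ∏ i, μ {ω | Y i ω = f i} := by
  have hfiber (f : ι → ℕ) : (fun ω i => Y i ω) ⁻¹' {f} = ⋂ i, {ω | Y i ω = f i} := by
    ext ω
    simp [funext_iff]
  have hset : {ω | ∑ i, Y i ω = m}
      = (fun ω i => Y i ω) ⁻¹' (piAntidiag (univ : Finset ι) m : Set (ι → ℕ)) := by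
    ext ω
    simp
  rw [hset, ← sum_measure_preimage_singleton]
  · refine sum_congr rfl fun f _ => ?_
    rw [hfiber]
    exact hind.meas_iInter fun i => ⟨{f i}, measurableSet_singleton _, rfl⟩
  · intro f _
    rw [hfiber]
    exact MeasurableSet.iInter fun i => hY i (measurableSet_singleton _)

end ProbabilityTheory

section PartialSums

variable {Ω : Type*} [MeasurableSpace Ω] {μ : Measure Ω} {X : ℕ → Ω → ℕ} {k : ℕ} {p : ℝ}

lemma measure_sum_range_eq_succ (hp0 : 0 ≤ p) (hp1 : p ≤ 1) (hmeas : ∀ i, Measurable (X i))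
    (hindep : iIndepFun X μ)
    (hdist : ∀ i < k, ∀ m : ℕ, μ {ω | X i ω = m} = ENNReal.ofReal (geomPMF p m))
    {c : ℕ} (hc : c < k) (m : ℕ) :
    μ {ω | ∑ i ∈ range (c + 1), X i ω = m + 1}
      = ENNReal.ofReal (m.choose c * p ^ (c + 1) * (1 - p) ^ (m - c)) := by
  simp_rw [← Fin.sum_univ_eq_sum_range]
  rw [(hindep.precomp Fin.val_injective).measure_sum_eq_sum_piAntidiag (fun i => hmeas i),
    ← sum_piAntidiag_fin_succ_prod_geomPMF,
    ENNReal.ofReal_sum_of_nonneg fun f _ => prod_nonneg fun i _ => geomPMF_nonneg hp0 hp1 _]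
  refine sum_congr rfl fun f _ => ?_
  rw [ENNReal.ofReal_prod_of_nonneg fun i _ => geomPMF_nonneg hp0 hp1 _]
  exact prod_congr rfl fun i _ => hdist i (by omega) (f i)

lemma measure_sum_range_eq_zero
    (hdist : ∀ i < k, ∀ m : ℕ, μ {ω | X i ω = m} = ENNReal.ofReal (geomPMF p m))
    {c : ℕ} (hc : c < k) :
    μ {ω | ∑ i ∈ range (c + 1), X i ω = 0} = 0 := by
  refine measure_mono_null (t := {ω | X 0 ω = 0}) (fun ω hω => ?_) ?_
  · exact (sum_eq_zero_iff.mp hω) 0 (by simp)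
  · rw [hdist 0 (by omega), geomPMF_zero, ENNReal.ofReal_zero]

lemma sum_measure_sum_range_eq_succ_le (hp0 : 0 ≤ p) (hp1 : p ≤ 1)
    (hmeas : ∀ i, Measurable (X i)) (hindep : iIndepFun X μ)
    (hdist : ∀ i < k, ∀ m : ℕ, μ {ω | X i ω = m} = ENNReal.ofReal (geomPMF p m)) (m : ℕ) :
    ∑ c ∈ range k, μ {ω | ∑ i ∈ range (c + 1), X i ω = m + 1} ≤ ENNReal.ofReal p := by
  have hq : 0 ≤ 1 - p := by linarith
  rw [sum_congr rfl fun c hc =>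
    measure_sum_range_eq_succ hp0 hp1 hmeas hindep hdist (mem_range.mp hc) m]
  calc ∑ c ∈ range k, ENNReal.ofReal (m.choose c * p ^ (c + 1) * (1 - p) ^ (m - c))
      ≤ ∑ c ∈ range (m + 1), ENNReal.ofReal (m.choose c * p ^ (c + 1) * (1 - p) ^ (m - c)) := by
        refine sum_le_sum_of_ne_zero fun c _ hc => mem_range.mpr ?_
        by_contra! hmc
        simp [Nat.choose_eq_zero_of_lt (Nat.lt_of_succ_le hmc)] at hc
    _ = ENNReal.ofReal (p * (p + (1 - p)) ^ m) := by
        rw [← ENNReal.ofReal_sum_of_nonneg fun c _ => by positivity, add_pow, mul_sum]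
        congr 1
        exact sum_congr rfl fun c _ => by ring
    _ = ENNReal.ofReal p := by simp

lemma card_mul_measure_sum_range_le (hp0 : 0 ≤ p) (hp1 : p ≤ 1)
    (hmeas : ∀ i, Measurable (X i)) (hindep : iIndepFun X μ)
    (hdist : ∀ i < k, ∀ m : ℕ, μ {ω | X i ω = m} = ENNReal.ofReal (geomPMF p m)) (n : ℕ) :
    k * μ {ω | ∑ i ∈ range k, X i ω ≤ n} ≤ ENNReal.ofReal (n * p) := by
  have hsum_le (c : ℕ) : μ {ω | ∑ i ∈ range (c + 1), X i ω ≤ n}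
      = ∑ m ∈ range (n + 1), μ {ω | ∑ i ∈ range (c + 1), X i ω = m} := by
    have hS : Measurable fun ω => ∑ i ∈ range (c + 1), X i ω :=
      Finset.measurable_sum _ fun i _ => hmeas i
    have hset : {ω | ∑ i ∈ range (c + 1), X i ω ≤ n}
        = (fun ω => ∑ i ∈ range (c + 1), X i ω) ⁻¹' (range (n + 1) : Set ℕ) := by
      ext ω
      simp
    rw [hset, ← sum_measure_preimage_singleton _ fun m _ => hS (measurableSet_singleton m)]
    rfl
  calc (k : ENNReal) * μ {ω | ∑ i ∈ range k, X i ω ≤ n}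
      = ∑ c ∈ range k, μ {ω | ∑ i ∈ range k, X i ω ≤ n} := by simp
    _ ≤ ∑ c ∈ range k, μ {ω | ∑ i ∈ range (c + 1), X i ω ≤ n} :=
        sum_le_sum fun c hc => measure_mono <| Set.ofPred_subset_ofPred.mpr fun ω hω =>
          (sum_le_sum_of_subset (range_subset_range.mpr (mem_range.mp hc))).trans hω
    _ = ∑ c ∈ range k, ∑ m ∈ range n, μ {ω | ∑ i ∈ range (c + 1), X i ω = m + 1} := by
        refine sum_congr rfl fun c hc => ?_
        rw [hsum_le, sum_range_succ', measure_sum_range_eq_zero hdist (mem_range.mp hc), add_zero]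
    _ = ∑ m ∈ range n, ∑ c ∈ range k, μ {ω | ∑ i ∈ range (c + 1), X i ω = m + 1} := sum_comm
    _ ≤ ∑ m ∈ range n, ENNReal.ofReal p :=
        sum_le_sum fun m _ => sum_measure_sum_range_eq_succ_le hp0 hp1 hmeas hindep hdist m
    _ = ENNReal.ofReal (n * p) := by simp [ENNReal.ofReal_mul]

end PartialSums

lemma Nat.ceil_sub_one_lt_iff {α : Type*} [Semiring α] [LinearOrder α] [IsStrictOrderedRing α]
    [FloorSemiring α] {x : α} (hx : 0 < x) (s : ℕ) : ⌈x⌉₊ - 1 < s ↔ x ≤ s := by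
  have := Nat.ceil_pos.mpr hx
  rw [← Nat.ceil_le]
  omega

/-- A sum `S` of `k` i.i.d. `Geom(p)` random variables (with `E[S] = k/p`)
exceeds half its mean with probability at least `1/2`. -/
theorem negbin_lower_deviation {Ω : Type*} [MeasurableSpace Ω] (μ : Measure Ω)
    [IsProbabilityMeasure μ]
    (k : ℕ) (hk : 1 ≤ k) (p : ℝ) (hp0 : 0 < p) (hp1 : p ≤ 1)
    (X : ℕ → Ω → ℕ) (hmeas : ∀ i, Measurable (X i))
    (hindep : iIndepFun X μ)
    (hdist : ∀ i < k, ∀ m : ℕ, μ {ω | X i ω = m} = ENNReal.ofReal (geomPMF p m)) :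
    ENNReal.ofReal (1 / 2)
      ≤ μ {ω | (k : ℝ) / p / 2 ≤ ∑ i ∈ Finset.range k, (X i ω : ℝ)} := by
  have hx : 0 < (k : ℝ) / p / 2 := div_pos (div_pos (Nat.cast_pos.mpr hk) hp0) two_pos
  set n := ⌈(k : ℝ) / p / 2⌉₊ - 1
  have hevent : {ω | (k : ℝ) / p / 2 ≤ ∑ i ∈ range k, (X i ω : ℝ)}
      = {ω | ∑ i ∈ range k, X i ω ≤ n}ᶜ := by
    ext ω
    simp [← Nat.cast_sum, ← Nat.ceil_sub_one_lt_iff hx, n]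
  have hnp : (n : ℝ) * p ≤ k / 2 := by
    have hn : (n : ℝ) < k / p / 2 :=
      not_le.mp fun h => lt_irrefl n ((Nat.ceil_sub_one_lt_iff hx n).mpr h)
    have := mul_lt_mul_of_pos_right hn hp0
    rw [show (k : ℝ) / p / 2 * p = k / 2 by field_simp] at this
    exact this.le
  have hbound : μ {ω | ∑ i ∈ range k, X i ω ≤ n} ≤ 2⁻¹ := by
    refine (ENNReal.mul_le_mul_iff_right (Nat.cast_ne_zero.mpr (by omega))
      (ENNReal.natCast_ne_top k)).mp ?_
    calc k * μ {ω | ∑ i ∈ range k, X i ω ≤ n}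
        ≤ ENNReal.ofReal (n * p) := card_mul_measure_sum_range_le hp0.le hp1 hmeas hindep hdist n
      _ ≤ ENNReal.ofReal (k / 2) := ENNReal.ofReal_le_ofReal hnp
      _ = k * 2⁻¹ := by simp [div_eq_mul_inv, ENNReal.ofReal_mul]
  rw [hevent, prob_compl_eq_one_sub
    (measurableSet_le (Finset.measurable_sum _ fun i _ => hmeas i) measurable_const),
    one_div, ENNReal.ofReal_inv_of_pos two_pos, ENNReal.ofReal_ofNat, ← ENNReal.one_sub_inv_two]
  exact tsub_le_tsub_left hbound 1
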